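/- arXiv:1312.2149 — 2 statements merged into one kernel-verified Lean document; each statement's English description precedes it below -/
import Mathlib

section
/- Let b: J → ℝ be nonvanishing and b²/σ² ∈ L¹_loc(J). Define the Feller test functions v(x) = ∫_c^x (s(x) - s(y)) · 2/(s'(y)σ²(y)) dy and v_X(x) = ∫_c^x (s(x) - s(y)) · 2b²(y)/(s'(y)σ²(y)) dy. Then for x ∈ J, both v(x) and v_X(x) are finite, and v_X(r) := lim_{x→r⁻} v_X(x) < ∞ if and only if s(r) < ∞ and the function y ↦ (s(r) - s(y)) b²(y)/(s'(y)σ²(y)) is integrable near r. -/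
/-!
Put `f = 2 b² / (s' σ²)`, positive and locally integrable on `J`, so that
`v_X x = ∫_c^x (s x - s y) f y dy` with a nonnegative integrand on `[c, x]`.
If `v_X ≤ M` on `[c, r)`, then for `c < x₁ ≤ x` we get `(s x - s x₁) ∫_c^{x₁} f ≤ v_X x ≤ M`,
so `s(r) < ∞`; letting `x → r` in `∫_c^z (s x - s y) f y dy ≤ v_X x` gives
`∫_c^z (s(r) - s y) f y dy ≤ M` for every `z < r`, and monotone convergence yields
integrability near `r`. Conversely, `v_X x ≤ ∫_c^r (s(r) - s y) f y dy` for all `x`.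
-/

open MeasureTheory Set Filter Topology

theorem EReal.iSup_coe_lt_top_iff {ι : Sort*} {g : ι → ℝ} :
    (⨆ i, (g i : EReal)) < ⊤ ↔ BddAbove (range g) := by
  constructor
  · intro h
    refine ⟨(⨆ i, (g i : EReal)).toReal, ?_⟩
    rintro _ ⟨i, rfl⟩
    have hi : (g i : EReal) ≤ ⨆ i, (g i : EReal) := le_iSup (fun i => (g i : EReal)) i
    exact EReal.coe_le_coe_iff.1 (hi.trans_eq (EReal.coe_toReal h.ne (ne_bot_of_le_ne_bot
      (EReal.coe_ne_bot _) hi)).symm)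
  · rintro ⟨B, hB⟩
    exact (iSup_le fun i => EReal.coe_le_coe_iff.2 (hB ⟨i, rfl⟩)).trans_lt (EReal.coe_lt_top B)

theorem EReal.isLUB_toReal_iSup_coe {ι : Sort*} [Nonempty ι] {g : ι → ℝ}
    (h : (⨆ i, (g i : EReal)) < ⊤) : IsLUB (range g) (⨆ i, (g i : EReal)).toReal := by
  obtain ⟨i₀⟩ := ‹Nonempty ι›
  have hA : ((⨆ i, (g i : EReal)).toReal : EReal) = ⨆ i, (g i : EReal) :=
    EReal.coe_toReal h.ne (ne_bot_of_le_ne_bot (EReal.coe_ne_bot (g i₀))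
      (le_iSup (fun i => (g i : EReal)) i₀))
  refine ⟨?_, fun B hB => ?_⟩
  · rintro _ ⟨i, rfl⟩
    exact EReal.coe_le_coe_iff.1 (hA ▸ le_iSup (fun i => (g i : EReal)) i)
  · exact EReal.coe_le_coe_iff.1 (hA ▸ iSup_le fun i => EReal.coe_le_coe_iff.2 (hB ⟨i, rfl⟩))

theorem EReal.exists_seq_real_tendsto {c : ℝ} {r : EReal} (hcr : (c : EReal) < r) :
    ∃ u : ℕ → ℝ, (∀ n, (u n : EReal) ∈ Ioo (c : EReal) r) ∧
      Tendsto (fun n => (u n : EReal)) atTop (𝓝 r) := by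
  obtain ⟨v, -, hv, hvr⟩ := exists_seq_strictMono_tendsto' hcr
  have hcoe : ∀ n, ((v n).toReal : EReal) = v n := fun n =>
    EReal.coe_toReal (hv n).2.ne_top (ne_bot_of_gt (hv n).1)
  exact ⟨fun n => (v n).toReal, fun n => hcoe n ▸ hv n, by simpa only [hcoe] using hvr⟩

theorem EReal.isOpen_preimage_coe_Ioo (ℓ r : EReal) : IsOpen (Real.toEReal ⁻¹' Ioo ℓ r) :=
  isOpen_Ioo.preimage continuous_coe_real_ereal

theorem EReal.ordConnected_preimage_coe_Ioo (ℓ r : EReal) :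
    (Real.toEReal ⁻¹' Ioo ℓ r).OrdConnected :=
  ordConnected_Ioo.preimage_mono EReal.coe_strictMono.monotone

theorem MeasureTheory.LocallyIntegrableOn.intervalIntegrable_of_mem {J : Set ℝ} {f : ℝ → ℝ}
    (hf : LocallyIntegrableOn f J) (hJ : J.OrdConnected) {a b : ℝ} (ha : a ∈ J) (hb : b ∈ J) :
    IntervalIntegrable f volume a b :=
  (hf.integrableOn_compact_subset (hJ.uIcc_subset ha hb) isCompact_uIcc).intervalIntegrable

section OpenInterval

variable {J : Set ℝ} {c : ℝ}

theorem continuousOn_primitive_of_locallyIntegrableOn {f : ℝ → ℝ} (hJo : IsOpen J)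
    (hJ : J.OrdConnected) (hf : LocallyIntegrableOn f J) (hc : c ∈ J) :
    ContinuousOn (fun x => ∫ y in c..x, f y) J := by
  intro x hx
  obtain ⟨a, b, hxab, hab, habJ⟩ := exists_Icc_mem_subset_of_mem_nhds (hJo.mem_nhds hx)
  have haJ : a ∈ J := habJ ⟨le_rfl, hxab.1.trans hxab.2⟩
  have hbJ : b ∈ J := habJ ⟨hxab.1.trans hxab.2, le_rfl⟩
  have hint :=
    hf.intervalIntegrable_of_mem hJ (min_rec' (· ∈ J) hc haJ) (max_rec' (· ∈ J) hc hbJ)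
  exact ((intervalIntegral.continuousWithinAt_primitive Real.volume_singleton hint).continuousAt
    hab).continuousWithinAt

theorem monotoneOn_primitive {f : ℝ → ℝ} (hJ : J.OrdConnected) (hf : LocallyIntegrableOn f J)
    (hf0 : ∀ y ∈ J, 0 ≤ f y) (hc : c ∈ J) : MonotoneOn (fun x => ∫ y in c..x, f y) J := by
  intro d hd e he hde
  have hsub := intervalIntegral.integral_interval_sub_left
    (hf.intervalIntegrable_of_mem hJ hc he) (hf.intervalIntegrable_of_mem hJ hc hd)
  have hpos : 0 ≤ ∫ y in d..e, f y :=
    intervalIntegral.integral_nonneg hde fun y hy => hf0 y (hJ.out hd he hy)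
  simp only
  linarith

theorem continuousOn_and_monotoneOn_of_scale {q ρ s : ℝ → ℝ} (hJo : IsOpen J)
    (hJ : J.OrdConnected) (hq : LocallyIntegrableOn q J) (hc : c ∈ J)
    (hρ : ∀ y, ρ y = Real.exp (-∫ u in c..y, q u)) (hs : ∀ x, s x = ∫ y in c..x, ρ y) :
    ContinuousOn ρ J ∧ ContinuousOn s J ∧ MonotoneOn s J := by
  have hρc : ContinuousOn ρ J := funext hρ ▸ Real.continuous_exp.comp_continuousOn
    (continuousOn_primitive_of_locallyIntegrableOn hJo hJ hq hc).neg
  have hρloc : LocallyIntegrableOn ρ J := hρc.locallyIntegrableOn hJo.measurableSet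
  exact ⟨hρc, funext hs ▸ continuousOn_primitive_of_locallyIntegrableOn hJo hJ hρloc hc,
    funext hs ▸ monotoneOn_primitive hJ hρloc (fun y _ => hρ y ▸ (Real.exp_pos _).le) hc⟩

end OpenInterval

theorem integrableOn_preimage_Ioo_of_intervalIntegral_le {g : ℝ → ℝ} {c M : ℝ} {r : EReal}
    (hcr : (c : EReal) < r)
    (hg : ∀ z ∈ Real.toEReal ⁻¹' Ioo c r, IntegrableOn g (Ioc c z))
    (hg0 : ∀ y ∈ Real.toEReal ⁻¹' Ioo c r, 0 ≤ g y)
    (hM : ∀ z ∈ Real.toEReal ⁻¹' Ioo c r, ∫ y in Ioc c z, g y ≤ M) :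
    IntegrableOn g (Real.toEReal ⁻¹' Ioo c r) := by
  set T := Real.toEReal ⁻¹' Ioo c r
  have hT : MeasurableSet T := measurableSet_Ioo.preimage measurable_coe_real_ereal
  obtain ⟨u, hu, hur⟩ := EReal.exists_seq_real_tendsto hcr
  have hIoc : ∀ n, Ioc c (u n) ⊆ T := fun n y hy =>
    ⟨EReal.coe_lt_coe_iff.2 hy.1, (EReal.coe_le_coe_iff.2 hy.2).trans_lt (hu n).2⟩
  have hrestrict : ∀ n,
      (volume.restrict T).restrict (Ioc c (u n)) = volume.restrict (Ioc c (u n)) := fun n => by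
    rw [Measure.restrict_restrict measurableSet_Ioc, inter_eq_left.2 (hIoc n)]
  have hcover : AECover (volume.restrict T) atTop fun n => Ioc c (u n) :=
    { ae_eventually_mem := ae_restrict_of_forall_mem hT fun y hy =>
        (hur.eventually (Ioi_mem_nhds hy.2)).mono fun n hn =>
          ⟨EReal.coe_lt_coe_iff.1 hy.1, (EReal.coe_lt_coe_iff.1 hn).le⟩
      measurableSet := fun _ => measurableSet_Ioc }
  refine hcover.integrable_of_integral_bounded_of_nonneg_ae M (fun n => ?_)
    (ae_restrict_of_forall_mem hT hg0) (Eventually.of_forall fun n => ?_)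
  · rw [IntegrableOn, hrestrict]
    exact hg _ (hu n)
  · rw [hrestrict]
    exact hM _ (hu n)

noncomputable def fellerTest (s f : ℝ → ℝ) (c x : ℝ) : ℝ := ∫ y in c..x, (s x - s y) * f y

section Feller

variable {J : Set ℝ} {s f : ℝ → ℝ} {c : ℝ}

theorem intervalIntegral_le_fellerTest {x z : ℝ} (hs : MonotoneOn s (Icc c x))
    (hf0 : ∀ y ∈ Icc c x, 0 ≤ f y)
    (hint : IntervalIntegrable (fun y => (s x - s y) * f y) volume c x)
    (hcz : c ≤ z) (hzx : z ≤ x) :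
    ∫ y in c..z, (s x - s y) * f y ≤ fellerTest s f c x := by
  have hcx := hcz.trans hzx
  refine intervalIntegral.integral_mono_interval le_rfl hcz hzx ?_ hint
  refine ae_restrict_of_forall_mem measurableSet_Ioc fun y hy => ?_
  have hy' : y ∈ Icc c x := Ioc_subset_Icc_self hy
  exact mul_nonneg (sub_nonneg.2 (hs hy' ⟨hcx, le_rfl⟩ hy.2)) (hf0 y hy')

theorem bddAbove_image_of_bddAbove_fellerTest (hJo : IsOpen J) (hJ : J.OrdConnected)
    (hc : c ∈ J) (hs : MonotoneOn s J) (hsc : ContinuousOn s J) (hf : LocallyIntegrableOn f J)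
    (hf0 : ∀ y ∈ J, 0 < f y) (hv : BddAbove (fellerTest s f c '' (J ∩ Ici c))) :
    BddAbove (s '' J) := by
  obtain ⟨M, hM⟩ := hv
  have hM0 : 0 ≤ M := by
    simpa [fellerTest] using hM ⟨c, ⟨hc, self_mem_Ici⟩, rfl⟩
  obtain ⟨x₁, hx₁, hcx₁⟩ : ∃ x₁, x₁ ∈ J ∧ c < x₁ :=
    ((eventually_nhdsWithin_of_eventually_nhds (hJo.eventually_mem hc)).and
      (self_mem_nhdsWithin : Ioi c ∈ 𝓝[>] c)).exists
  set F := ∫ y in c..x₁, f y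
  have hF : 0 < F := intervalIntegral.intervalIntegral_pos_of_pos_on
    (hf.intervalIntegrable_of_mem hJ hc hx₁)
    (fun y hy => hf0 y (hJ.out hc hx₁ (Ioo_subset_Icc_self hy))) hcx₁
  refine ⟨s x₁ + M / F, ?_⟩
  rintro _ ⟨x, hx, rfl⟩
  rcases le_total x x₁ with hxx₁ | hx₁x
  · exact (hs hx hx₁ hxx₁).trans (le_add_of_nonneg_right (div_nonneg hM0 hF.le))
  have hint : ∀ a, IntervalIntegrable (fun y => (a - s y) * f y) volume c x := fun a =>
    (hf.continuousOn_mul (continuousOn_const.sub hsc)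
      hJo.isLocallyClosed).intervalIntegrable_of_mem hJ hc hx
  have hbound : (s x - s x₁) * F ≤ M := calc
    (s x - s x₁) * F = ∫ y in c..x₁, (s x - s x₁) * f y :=
      (intervalIntegral.integral_const_mul _ _).symm
    _ ≤ ∫ y in c..x₁, (s x - s y) * f y := by
      refine intervalIntegral.integral_mono_on hcx₁.le
        ((hf.intervalIntegrable_of_mem hJ hc hx₁).const_mul _)
        ((hint (s x)).mono_set (uIcc_subset_uIcc_left (mem_uIcc_of_le hcx₁.le hx₁x))) ?_
      intro y hy
      have hyJ := hJ.out hc hx₁ hy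
      exact mul_le_mul_of_nonneg_right (sub_le_sub_left (hs hyJ hx₁ hy.2) _) (hf0 y hyJ).le
    _ ≤ fellerTest s f c x := intervalIntegral_le_fellerTest (hs.mono (hJ.out hc hx))
      (fun y hy => (hf0 y (hJ.out hc hx hy)).le) (hint (s x)) hcx₁.le hx₁x
    _ ≤ M := hM ⟨x, ⟨hx, hcx₁.le.trans hx₁x⟩, rfl⟩
  rw [← le_div_iff₀ hF] at hbound
  linarith

theorem intervalIntegral_sub_mul_le_of_fellerTest_le (hJo : IsOpen J) (hJ : J.OrdConnected)
    (hc : c ∈ J) (hs : MonotoneOn s J) (hsc : ContinuousOn s J) (hf : LocallyIntegrableOn f J)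
    (hf0 : ∀ y ∈ J, 0 ≤ f y) {A M : ℝ} (hA : IsLUB (s '' J) A)
    (hM : ∀ x ∈ J, c ≤ x → fellerTest s f c x ≤ M) {z : ℝ} (hz : z ∈ J) (hcz : c ≤ z) :
    ∫ y in c..z, (A - s y) * f y ≤ M := by
  have hint : ∀ a x, x ∈ J → IntervalIntegrable (fun y => (a - s y) * f y) volume c x :=
    fun a x hx => (hf.continuousOn_mul (continuousOn_const.sub hsc)
      hJo.isLocallyClosed).intervalIntegrable_of_mem hJ hc hx
  set F := ∫ y in c..z, f y
  have hF : 0 ≤ F := intervalIntegral.integral_nonneg hcz fun y hy => hf0 y (hJ.out hc hz hy)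
  refine le_of_forall_pos_le_add fun ε hε => ?_
  obtain ⟨_, ⟨x, hx, rfl⟩, hAx, -⟩ :=
    hA.exists_between (sub_lt_self A (div_pos hε (by linarith : (0 : ℝ) < F + 1)))
  have hx' : max x z ∈ J := max_rec' (· ∈ J) hx hz
  have hsx' : A - s (max x z) ≤ ε / (F + 1) := by
    linarith [hs hx hx' (le_max_left x z)]
  calc ∫ y in c..z, (A - s y) * f y
      = (∫ y in c..z, (s (max x z) - s y) * f y) + (A - s (max x z)) * F := by
        rw [← intervalIntegral.integral_const_mul, ← intervalIntegral.integral_add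
          (hint (s (max x z)) z hz) ((hf.intervalIntegrable_of_mem hJ hc hz).const_mul
            (A - s (max x z)))]
        congr 1 with y
        ring
    _ ≤ M + ε / (F + 1) * F := add_le_add
      ((intervalIntegral_le_fellerTest (hs.mono (hJ.out hc hx'))
        (fun y hy => hf0 y (hJ.out hc hx' hy)) (hint _ _ hx') hcz (le_max_right x z)).trans
        (hM _ hx' (hcz.trans (le_max_right x z))))
      (mul_le_mul_of_nonneg_right hsx' hF)
    _ ≤ M + ε := by
      have : ε / (F + 1) * F ≤ ε := by
        rw [div_mul_eq_mul_div, div_le_iff₀ (by linarith)]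
        nlinarith
      linarith

end Feller

section FellerEReal

variable {ℓ r : EReal} {s f g : ℝ → ℝ} {c : ℝ}

theorem integrableOn_preimage_Ioo_of_integrableOn_tail
    (hg : LocallyIntegrableOn g (Real.toEReal ⁻¹' Ioo ℓ r)) (hc : c ∈ Real.toEReal ⁻¹' Ioo ℓ r)
    {x₀ : ℝ} (hx₀ : x₀ ∈ Real.toEReal ⁻¹' Ioo ℓ r)
    (htail : IntegrableOn g (Real.toEReal ⁻¹' Ioo x₀ r)) :
    IntegrableOn g (Real.toEReal ⁻¹' Ioo c r) := by
  refine ((hg.integrableOn_compact_subset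
    ((EReal.ordConnected_preimage_coe_Ioo ℓ r).uIcc_subset hc hx₀) isCompact_uIcc).union
    htail).mono_set fun y hy => ?_
  rcases le_or_gt y x₀ with hyx₀ | hx₀y
  · exact Or.inl (Icc_subset_uIcc ⟨(EReal.coe_lt_coe_iff.1 hy.1).le, hyx₀⟩)
  · exact Or.inr ⟨EReal.coe_lt_coe_iff.2 hx₀y, hy.2⟩

theorem fellerTest_le_setIntegral {x A : ℝ} (hc : c ∈ Real.toEReal ⁻¹' Ioo ℓ r)
    (hx : x ∈ Real.toEReal ⁻¹' Ioo ℓ r) (hcx : c ≤ x)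
    (hA : ∀ y ∈ Real.toEReal ⁻¹' Ioo ℓ r, s y ≤ A)
    (hf0 : ∀ y ∈ Real.toEReal ⁻¹' Ioo ℓ r, 0 ≤ f y)
    (hint : IntervalIntegrable (fun y => (s x - s y) * f y) volume c x)
    (hintA : IntegrableOn (fun y => (A - s y) * f y) (Real.toEReal ⁻¹' Ioo c r)) :
    fellerTest s f c x ≤ ∫ y in Real.toEReal ⁻¹' Ioo c r, (A - s y) * f y := by
  have hTJ : Real.toEReal ⁻¹' Ioo c r ⊆ Real.toEReal ⁻¹' Ioo ℓ r :=
    preimage_mono (Ioo_subset_Ioo_left hc.1.le)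
  have hIoc : Ioc c x ⊆ Real.toEReal ⁻¹' Ioo c r := fun y hy =>
    ⟨EReal.coe_lt_coe_iff.2 hy.1, (EReal.coe_le_coe_iff.2 hy.2).trans_lt hx.2⟩
  calc fellerTest s f c x
      ≤ ∫ y in c..x, (A - s y) * f y := by
        refine intervalIntegral.integral_mono_on hcx hint
          ((intervalIntegrable_iff_integrableOn_Ioc_of_le hcx).2 (hintA.mono_set hIoc))
          fun y hy => mul_le_mul_of_nonneg_right (sub_le_sub_right (hA x hx) _)
            (hf0 y ((EReal.ordConnected_preimage_coe_Ioo ℓ r).out hc hx hy))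
    _ = ∫ y in Ioc c x, (A - s y) * f y := intervalIntegral.integral_of_le hcx
    _ ≤ ∫ y in Real.toEReal ⁻¹' Ioo c r, (A - s y) * f y :=
        setIntegral_mono_set hintA (ae_restrict_of_forall_mem
          (measurableSet_Ioo.preimage measurable_coe_real_ereal) fun y hy =>
            mul_nonneg (sub_nonneg.2 (hA y (hTJ hy))) (hf0 y (hTJ hy))) hIoc.eventuallyLE

theorem bddAbove_fellerTest_iff (hc : c ∈ Real.toEReal ⁻¹' Ioo ℓ r)
    (hs : MonotoneOn s (Real.toEReal ⁻¹' Ioo ℓ r))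
    (hsc : ContinuousOn s (Real.toEReal ⁻¹' Ioo ℓ r))
    (hf : LocallyIntegrableOn f (Real.toEReal ⁻¹' Ioo ℓ r))
    (hf0 : ∀ y ∈ Real.toEReal ⁻¹' Ioo ℓ r, 0 < f y) :
    BddAbove (fellerTest s f c '' (Real.toEReal ⁻¹' Ioo ℓ r ∩ Ici c)) ↔
      BddAbove (s '' (Real.toEReal ⁻¹' Ioo ℓ r)) ∧ ∃ x₀ ∈ Real.toEReal ⁻¹' Ioo ℓ r,
        IntegrableOn (fun y => (sSup (s '' (Real.toEReal ⁻¹' Ioo ℓ r)) - s y) * f y)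
          (Real.toEReal ⁻¹' Ioo x₀ r) := by
  have hJo := EReal.isOpen_preimage_coe_Ioo ℓ r
  have hJ := EReal.ordConnected_preimage_coe_Ioo ℓ r
  have hg : ∀ A, LocallyIntegrableOn (fun y => (A - s y) * f y) (Real.toEReal ⁻¹' Ioo ℓ r) :=
    fun A => hf.continuousOn_mul (continuousOn_const.sub hsc) hJo.isLocallyClosed
  have hTJ : Real.toEReal ⁻¹' Ioo c r ⊆ Real.toEReal ⁻¹' Ioo ℓ r :=
    preimage_mono (Ioo_subset_Ioo_left hc.1.le)
  constructor
  · intro hv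
    have hbdd := bddAbove_image_of_bddAbove_fellerTest hJo hJ hc hs hsc hf hf0 hv
    have hA := isLUB_csSup (nonempty_of_mem (mem_image_of_mem s hc)) hbdd
    obtain ⟨M, hM⟩ := hv
    refine ⟨hbdd, c, hc, integrableOn_preimage_Ioo_of_intervalIntegral_le (M := M) hc.2
      (fun z hz => ((hg _).intervalIntegrable_of_mem hJ hc (hTJ hz)).1)
      (fun y hy => mul_nonneg (sub_nonneg.2 (hA.1 ⟨y, hTJ hy, rfl⟩)) (hf0 y (hTJ hy)).le)
      fun z hz => ?_⟩
    have hcz : c ≤ z := (EReal.coe_lt_coe_iff.1 hz.1).le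
    rw [← intervalIntegral.integral_of_le hcz]
    exact intervalIntegral_sub_mul_le_of_fellerTest_le hJo hJ hc hs hsc hf
      (fun y hy => (hf0 y hy).le) hA (fun x hx hcx => hM ⟨x, ⟨hx, hcx⟩, rfl⟩) (hTJ hz) hcz
  · rintro ⟨hbdd, x₀, hx₀, htail⟩
    exact ⟨_, forall_mem_image.2 fun x hx => fellerTest_le_setIntegral hc hx.1 hx.2
      (fun y hy => le_csSup hbdd ⟨y, hy, rfl⟩) (fun y hy => (hf0 y hy).le)
      ((hg _).intervalIntegrable_of_mem hJ hc hx.1)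
      (integrableOn_preimage_Ioo_of_integrableOn_tail (hg _) hc hx₀ htail)⟩

theorem iSup_fellerTest_lt_top_iff (hc : c ∈ Real.toEReal ⁻¹' Ioo ℓ r)
    (hs : MonotoneOn s (Real.toEReal ⁻¹' Ioo ℓ r))
    (hsc : ContinuousOn s (Real.toEReal ⁻¹' Ioo ℓ r))
    (hf : LocallyIntegrableOn f (Real.toEReal ⁻¹' Ioo ℓ r))
    (hf0 : ∀ y ∈ Real.toEReal ⁻¹' Ioo ℓ r, 0 < f y) :
    (⨆ x : ↥(Real.toEReal ⁻¹' Ioo ℓ r ∩ Ici c), (fellerTest s f c x : EReal)) < ⊤ ↔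
      (⨆ x : ↥(Real.toEReal ⁻¹' Ioo ℓ r), (s x : EReal)) < ⊤ ∧
        ∃ x₀ ∈ Real.toEReal ⁻¹' Ioo ℓ r, IntegrableOn
          (fun y => ((⨆ x : ↥(Real.toEReal ⁻¹' Ioo ℓ r), (s x : EReal)).toReal - s y) * f y)
          (Real.toEReal ⁻¹' Ioo x₀ r) := by
  have : Nonempty ↥(Real.toEReal ⁻¹' Ioo ℓ r) := ⟨⟨c, hc⟩⟩
  rw [EReal.iSup_coe_lt_top_iff, EReal.iSup_coe_lt_top_iff, ← image_eq_range, ← image_eq_range,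
    bddAbove_fellerTest_iff hc hs hsc hf hf0]
  refine and_congr_right fun hbdd => ?_
  have hlub := EReal.isLUB_toReal_iSup_coe
    (EReal.iSup_coe_lt_top_iff.2 ((image_eq_range s _) ▸ hbdd))
  rw [← hlub.csSup_eq (range_nonempty _), ← image_eq_range]

end FellerEReal

theorem stmt7_general (ℓ r : EReal) (μ σ b : ℝ → ℝ) (c : ℝ)
    (hc : ℓ < (c : EReal) ∧ (c : EReal) < r)
    (hσne : ∀ x : ℝ, ℓ < (x : EReal) → (x : EReal) < r → σ x ≠ 0)
    (hbne : ∀ x : ℝ, ℓ < (x : EReal) → (x : EReal) < r → b x ≠ 0)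
    (hloc : ∀ K : Set ℝ, K ⊆ {x : ℝ | ℓ < (x : EReal) ∧ (x : EReal) < r} → IsCompact K →
      IntegrableOn (fun x => 1 / (σ x)^2) K volume ∧
      IntegrableOn (fun x => μ x / (σ x)^2) K volume ∧
      IntegrableOn (fun x => (b x)^2 / (σ x)^2) K volume)
    (ρ s vX : ℝ → ℝ) (sr vXr : EReal)
    (hρ : ∀ y : ℝ, ρ y = Real.exp (-∫ u in c..y, 2 * μ u / (σ u)^2))
    (hs : ∀ x : ℝ, s x = ∫ y in c..x, ρ y)
    (hvX : ∀ x : ℝ, vX x = ∫ y in c..x, (s x - s y) * (2 * (b y)^2 / (ρ y * (σ y)^2)))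
    (hsr : sr = ⨆ x : {x : ℝ // ℓ < (x : EReal) ∧ (x : EReal) < r}, ((s (x : ℝ) : ℝ) : EReal))
    (hvXr : vXr = ⨆ x : {x : ℝ // (ℓ < (x : EReal) ∧ (x : EReal) < r) ∧ c ≤ x},
      ((vX (x : ℝ) : ℝ) : EReal)) :
    (∀ x : ℝ, ℓ < (x : EReal) → (x : EReal) < r →
      IntervalIntegrable (fun y => (s x - s y) * (2 / (ρ y * (σ y)^2))) volume c x
      ∧ IntervalIntegrable (fun y => (s x - s y) * (2 * (b y)^2 / (ρ y * (σ y)^2))) volume c x)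
    ∧ (vXr < ⊤ ↔ sr < ⊤ ∧ ∃ x₀ : ℝ, (ℓ < (x₀ : EReal) ∧ (x₀ : EReal) < r) ∧
        IntegrableOn (fun y => (sr.toReal - s y) * (b y)^2 / (ρ y * (σ y)^2))
          {y : ℝ | x₀ < y ∧ (y : EReal) < r} volume) := by
  set J := Real.toEReal ⁻¹' Ioo ℓ r
  have hJo := EReal.isOpen_preimage_coe_Ioo ℓ r
  have hJ := EReal.ordConnected_preimage_coe_Ioo ℓ r
  have hlocJ : ∀ w : ℝ → ℝ, (∀ K ⊆ J, IsCompact K → IntegrableOn w K) →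
      LocallyIntegrableOn w J := fun w => (locallyIntegrableOn_iff hJo.isLocallyClosed).2
  have hq : LocallyIntegrableOn (fun u => 2 * μ u / σ u ^ 2) J := by
    simpa only [mul_div_assoc] using (hlocJ _ fun K hK hKc => (hloc K hK hKc).2.1).continuousOn_mul
      (continuousOn_const (c := (2 : ℝ))) hJo.isLocallyClosed
  obtain ⟨hρc, hsc, hsm⟩ := continuousOn_and_monotoneOn_of_scale hJo hJ hq hc hρ hs
  have hρ0 : ∀ y, 0 < ρ y := fun y => hρ y ▸ Real.exp_pos _
  set f := fun y => 2 * (b y)^2 / (ρ y * (σ y)^2) with hf_def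
  have hf : LocallyIntegrableOn f J := by
    convert (hlocJ _ fun K hK hKc => (hloc K hK hKc).2.2).continuousOn_mul
      (g := fun y => 2 / ρ y) (continuousOn_const.div hρc fun y _ => (hρ0 y).ne')
      hJo.isLocallyClosed using 1
    funext y
    ring
  have hf0 : ∀ y ∈ J, 0 < f y := fun y hy =>
    div_pos (mul_pos two_pos (pow_two_pos_of_ne_zero (hbne y hy.1 hy.2)))
      (mul_pos (hρ0 y) (pow_two_pos_of_ne_zero (hσne y hy.1 hy.2)))
  refine ⟨fun x hxl hxr => ⟨?_, (hf.continuousOn_mul (continuousOn_const.sub hsc)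
    hJo.isLocallyClosed).intervalIntegrable_of_mem hJ hc ⟨hxl, hxr⟩⟩, ?_⟩
  · convert ((hlocJ _ fun K hK hKc => (hloc K hK hKc).1).continuousOn_mul
      (g := fun y => (s x - s y) * 2 / ρ y)
      (((continuousOn_const.sub hsc).mul continuousOn_const).div hρc fun y _ => (hρ0 y).ne')
      hJo.isLocallyClosed).intervalIntegrable_of_mem hJ hc ⟨hxl, hxr⟩ using 1
    funext y
    ring
  rw [hvXr, show sr = ⨆ x : ↥J, (s x : EReal) from hsr,
    show vX = fellerTest s f c from funext hvX]
  refine (iSup_fellerTest_lt_top_iff hc hsm hsc hf hf0).trans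
    (and_congr_right fun _ => exists_congr fun x₀ => and_congr_right fun _ => ?_)
  have hT : {y : ℝ | x₀ < y ∧ (y : EReal) < r} = Real.toEReal ⁻¹' Ioo x₀ r := by
    ext y
    simp [EReal.coe_lt_coe_iff]
  rw [hT, IntegrableOn, IntegrableOn]
  conv_rhs => rw [← integrable_const_mul_iff two_ne_zero.isUnit]
  congr! 2 with y
  simp only [hf_def]
  ring

/-- For nonvanishing `b` with `b²/σ² ∈ L¹_loc(J)`, the Feller test functions
`v x = ∫_c^x (s x - s y)·2/(s'(y)σ²(y)) dy` and
`v_X x = ∫_c^x (s x - s y)·2b²(y)/(s'(y)σ²(y)) dy` are finite (their integrands are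
interval-integrable) for `x ∈ J`, and `v_X(r) = lim_{x→r⁻} v_X(x) < ∞` (the monotone limit,
realized as a supremum in `EReal`) iff `s(r) < ∞` and
`y ↦ (s(r) - s y) b²(y)/(s'(y) σ²(y))` is integrable near `r`. -/
theorem stmt7 (ℓ r : EReal) (hlr : ℓ < r) (μ σ b : ℝ → ℝ) (c : ℝ)
    (hc : ℓ < (c : EReal) ∧ (c : EReal) < r)
    (hμ : Measurable μ) (hσ : Measurable σ) (hb : Measurable b)
    (hσne : ∀ x : ℝ, ℓ < (x : EReal) → (x : EReal) < r → σ x ≠ 0)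
    (hbne : ∀ x : ℝ, ℓ < (x : EReal) → (x : EReal) < r → b x ≠ 0)
    (hloc : ∀ K : Set ℝ, K ⊆ {x : ℝ | ℓ < (x : EReal) ∧ (x : EReal) < r} → IsCompact K →
      IntegrableOn (fun x => 1 / (σ x)^2) K volume ∧
      IntegrableOn (fun x => μ x / (σ x)^2) K volume ∧
      IntegrableOn (fun x => (b x)^2 / (σ x)^2) K volume)
    (ρ s v vX : ℝ → ℝ) (sr vXr : EReal)
    (hρ : ∀ y : ℝ, ρ y = Real.exp (-∫ u in c..y, 2 * μ u / (σ u)^2))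
    (hs : ∀ x : ℝ, s x = ∫ y in c..x, ρ y)
    (hv : ∀ x : ℝ, v x = ∫ y in c..x, (s x - s y) * (2 / (ρ y * (σ y)^2)))
    (hvX : ∀ x : ℝ, vX x = ∫ y in c..x, (s x - s y) * (2 * (b y)^2 / (ρ y * (σ y)^2)))
    (hsr : sr = ⨆ x : {x : ℝ // ℓ < (x : EReal) ∧ (x : EReal) < r}, ((s (x : ℝ) : ℝ) : EReal))
    (hvXr : vXr = ⨆ x : {x : ℝ // (ℓ < (x : EReal) ∧ (x : EReal) < r) ∧ c ≤ x},
      ((vX (x : ℝ) : ℝ) : EReal)) :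
    (∀ x : ℝ, ℓ < (x : EReal) → (x : EReal) < r →
      IntervalIntegrable (fun y => (s x - s y) * (2 / (ρ y * (σ y)^2))) volume c x
      ∧ IntervalIntegrable (fun y => (s x - s y) * (2 * (b y)^2 / (ρ y * (σ y)^2))) volume c x)
    ∧ (vXr < ⊤ ↔ sr < ⊤ ∧ ∃ x₀ : ℝ, (ℓ < (x₀ : EReal) ∧ (x₀ : EReal) < r) ∧
        IntegrableOn (fun y => (sr.toReal - s y) * (b y)^2 / (ρ y * (σ y)^2))
          {y : ℝ | x₀ < y ∧ (y : EReal) < r} volume) :=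
  stmt7_general ℓ r μ σ b c hc hσne hbne hloc ρ s vX sr vXr hρ hs hvX hsr hvXr
end

section
/- With the notation above, if s(r) < ∞ then finiteness of v_X(r) is equivalent to local integrability of (s(r) - s)·f/(s'σ²) at r⁻, where f = b². In particular, if (s(r) - s)f/(s'σ²) ∈ L¹_loc(r⁻) and s(r) < ∞, then v_X(r) < ∞; and if (s(r) - s)f/(s'σ²) ∉ L¹_loc(r⁻), then v_X(r) = ∞. -/
/-!
Since `s` is nondecreasing on `J` with supremum `s(r)`, the weights `s x - s y` increase to
`s(r) - s y` as `x ↑ r`, so monotone convergence gives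
`v_X(r) = 2 ∫_c^r (s(r) - s) f / (s' σ²)`. On a compact subinterval of `J` the factor
`(s(r) - s) / s'` is continuous, hence bounded, while `f / σ²` is integrable there; so the integral
over `(c, r)` is finite exactly when the integral over some `(x₀, r)` is.
-/

open MeasureTheory Set Filter Topology
open scoped ENNReal

theorem continuousOn_primitive_of_intervalIntegrable {J : Set ℝ} {c : ℝ} {g : ℝ → ℝ}
    (hJ : IsOpen J) (hc : c ∈ J)
    (hg : ∀ a ∈ J, ∀ b ∈ J, IntervalIntegrable g volume a b) :
    ContinuousOn (fun x => ∫ t in c..x, g t) J := by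
  intro x hx
  obtain ⟨a, b, hxab, hab_nhds, habJ⟩ := exists_Icc_mem_subset_of_mem_nhds (hJ.mem_nhds hx)
  have haJ : a ∈ J := habJ (left_mem_Icc.2 (hxab.1.trans hxab.2))
  have hbJ : b ∈ J := habJ (right_mem_Icc.2 (hxab.1.trans hxab.2))
  have hab_sub : Icc a b ⊆ uIcc (min c a) (max c b) :=
    (Icc_subset_Icc (min_le_right c a) (le_max_right c b)).trans Icc_subset_uIcc
  have hcont := intervalIntegral.continuousOn_primitive_interval'
    (hg _ (min_rec' (· ∈ J) hc haJ) _ (max_rec' (· ∈ J) hc hbJ))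
    (mem_uIcc_of_le (min_le_left c a) (le_max_left c b))
  exact (hcont.continuousAt (mem_of_superset hab_nhds hab_sub)).continuousWithinAt

theorem monotoneOn_primitive_of_nonneg {J : Set ℝ} {c : ℝ} {g : ℝ → ℝ} (hc : c ∈ J)
    (hg : ∀ a ∈ J, ∀ b ∈ J, IntervalIntegrable g volume a b) (hg_nonneg : ∀ x, 0 ≤ g x) :
    MonotoneOn (fun x => ∫ t in c..x, g t) J := by
  intro a ha b hb hab
  have hsub := intervalIntegral.integral_interval_sub_left (hg c hc b hb) (hg c hc a ha)
  have hnonneg := intervalIntegral.integral_nonneg (μ := volume) hab fun x _ => hg_nonneg x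
  dsimp only
  linarith

theorem exists_monotone_tendsto_of_coe_lt {c : ℝ} {r : EReal} (h : (c : EReal) < r) :
    ∃ x : ℕ → ℝ, Monotone x ∧ (∀ n, c ≤ x n ∧ (x n : EReal) < r) ∧
      Tendsto (fun n => (x n : EReal)) atTop (𝓝 r) := by
  obtain ⟨u, hu_mono, hu_mem, hu_lim⟩ := exists_seq_strictMono_tendsto' h
  have hu_coe : ∀ n, ((u n).toReal : EReal) = u n := fun n =>
    EReal.coe_toReal (hu_mem n).2.ne_top (hu_mem n).1.ne_bot
  refine ⟨fun n => (u n).toReal, fun m n hmn => ?_, fun n => ⟨?_, ?_⟩, ?_⟩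
  · exact EReal.coe_le_coe_iff.1 (by rw [hu_coe, hu_coe]; exact hu_mono.monotone hmn)
  · exact EReal.coe_le_coe_iff.1 (by rw [hu_coe]; exact (hu_mem n).1.le)
  · rw [hu_coe]; exact (hu_mem n).2
  · simpa only [hu_coe] using hu_lim

theorem setLIntegral_iUnion_ofReal_sub_mul_eq_iSup {α : Type*} [MeasurableSpace α]
    {ν : Measure α} {S : ℕ → Set α} (hS : Monotone S) (hSm : ∀ n, MeasurableSet (S n))
    {a : ℕ → ℝ} (ha : Monotone a) {L : ℝ} (haL : Tendsto a atTop (𝓝 L)) {g : α → ℝ}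
    {w : α → ℝ≥0∞} (hg : AEMeasurable g (ν.restrict (⋃ n, S n)))
    (hw : AEMeasurable w (ν.restrict (⋃ n, S n))) :
    ∫⁻ y in ⋃ n, S n, ENNReal.ofReal (L - g y) * w y ∂ν
      = ⨆ n, ∫⁻ y in S n, ENNReal.ofReal (a n - g y) * w y ∂ν := by
  set F : ℕ → α → ℝ≥0∞ := fun n => (S n).indicator fun y => ENNReal.ofReal (a n - g y) * w y
  have hF_mono : ∀ y, Monotone fun n => F n y := by
    intro y m n hmn
    by_cases hy : y ∈ S m
    · simp only [F, indicator_of_mem hy, indicator_of_mem (hS hmn hy)]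
      gcongr
      exact ha hmn
    · simp only [F, indicator_of_notMem hy, zero_le]
  have hF_sup : EqOn (fun y => ⨆ n, F n y) (fun y => ENNReal.ofReal (L - g y) * w y)
      (⋃ n, S n) := by
    intro y hy
    obtain ⟨N, hN⟩ := mem_iUnion.1 hy
    have hlim : ⨆ n, ENNReal.ofReal (a n - g y) = ENNReal.ofReal (L - g y) :=
      tendsto_nhds_unique
        (tendsto_atTop_iSup fun m n hmn => ENNReal.ofReal_le_ofReal (by linarith [ha hmn]))
        (ENNReal.tendsto_ofReal (haL.sub_const _))
    dsimp only
    rw [← hlim, ENNReal.iSup_mul]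
    refine le_antisymm (iSup_mono fun n => indicator_le_self _ _ y) (iSup_le fun n => ?_)
    calc ENNReal.ofReal (a n - g y) * w y
        ≤ ENNReal.ofReal (a (max n N) - g y) * w y := by gcongr; exact ha (le_max_left n N)
      _ = F (max n N) y := by simp only [F, indicator_of_mem (hS (le_max_right n N) hN)]
      _ ≤ ⨆ n, F n y := le_iSup (fun n => F n y) _
  have hF_meas : ∀ n, AEMeasurable (F n) (ν.restrict (⋃ n, S n)) := fun n =>
    ((ENNReal.measurable_ofReal.comp_aemeasurable (aemeasurable_const.sub hg)).mul hw).indicator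
      (hSm n)
  calc ∫⁻ y in ⋃ n, S n, ENNReal.ofReal (L - g y) * w y ∂ν
      = ∫⁻ y in ⋃ n, S n, ⨆ n, F n y ∂ν :=
        (setLIntegral_congr_fun (MeasurableSet.iUnion hSm) hF_sup).symm
    _ = ⨆ n, ∫⁻ y in ⋃ n, S n, F n y ∂ν := lintegral_iSup' hF_meas (ae_of_all _ hF_mono)
    _ = ⨆ n, ∫⁻ y in S n, ENNReal.ofReal (a n - g y) * w y ∂ν := by
        congr 1 with n
        rw [setLIntegral_indicator (hSm n), inter_eq_left.2 (subset_iUnion S n)]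

theorem iSup_setLIntegral_Ioc_ofReal_sub_mul_eq {c L : ℝ} {r : EReal} (hcr : (c : EReal) < r)
    {g : ℝ → ℝ} (hg : MonotoneOn g {x | c ≤ x ∧ (x : EReal) < r})
    (hL : IsLUB (g '' {x | c ≤ x ∧ (x : EReal) < r}) L) {w : ℝ → ℝ≥0∞}
    (hw : AEMeasurable w (volume.restrict {y | c < y ∧ (y : EReal) < r})) :
    ⨆ x : {x : ℝ // c ≤ x ∧ (x : EReal) < r}, ∫⁻ y in Ioc c x, ENNReal.ofReal (g x - g y) * w y
      = ∫⁻ y in {y | c < y ∧ (y : EReal) < r}, ENNReal.ofReal (L - g y) * w y := by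
  set T := {x : ℝ | c ≤ x ∧ (x : EReal) < r}
  set S := {y : ℝ | c < y ∧ (y : EReal) < r}
  have hSm : MeasurableSet S :=
    measurableSet_Ioi.inter (measurableSet_lt measurable_coe_real_ereal measurable_const)
  have hIoc : ∀ x ∈ T, Ioc c x ⊆ S := fun x hx y hy =>
    ⟨hy.1, (EReal.coe_le_coe_iff.2 hy.2).trans_lt hx.2⟩
  refine le_antisymm (iSup_le fun x => ?_) ?_
  · refine (lintegral_mono fun y => ?_).trans (lintegral_mono_set (hIoc x x.2))
    gcongr
    exact hL.1 ⟨x, x.2, rfl⟩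
  obtain ⟨x, hx_mono, hxT, hx_lim⟩ := exists_monotone_tendsto_of_coe_lt hcr
  have hS_eq : ⋃ n, Ioc c (x n) = S := by
    refine Subset.antisymm (iUnion_subset fun n => hIoc _ (hxT n)) fun y hy => ?_
    obtain ⟨n, hn⟩ := (hx_lim.eventually_const_lt hy.2).exists
    exact mem_iUnion.2 ⟨n, hy.1, (EReal.coe_lt_coe_iff.1 hn).le⟩
  have hgx_mono : Monotone fun n => g (x n) := fun m n hmn => hg (hxT m) (hxT n) (hx_mono hmn)
  have hgx_lim : Tendsto (fun n => g (x n)) atTop (𝓝 L) := by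
    refine tendsto_atTop_isLUB hgx_mono ⟨?_, fun b hb => hL.2 ?_⟩
    · rintro _ ⟨n, rfl⟩
      exact hL.1 ⟨x n, hxT n, rfl⟩
    · rintro _ ⟨z, hz, rfl⟩
      obtain ⟨n, hn⟩ := (hx_lim.eventually_const_lt hz.2).exists
      exact (hg hz (hxT n) (EReal.coe_lt_coe_iff.1 hn).le).trans (hb ⟨n, rfl⟩)
  have hgS : AEMeasurable g (volume.restrict S) :=
    aemeasurable_restrict_of_monotoneOn hSm (hg.mono fun y hy => ⟨hy.1.le, hy.2⟩)
  have hmct := setLIntegral_iUnion_ofReal_sub_mul_eq_iSup (fun m n hmn => Ioc_subset_Ioc_right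
    (hx_mono hmn)) (fun n => measurableSet_Ioc) hgx_mono hgx_lim (hS_eq ▸ hgS) (hS_eq ▸ hw)
  rw [hS_eq] at hmct
  rw [hmct]
  exact iSup_le fun n => le_iSup_of_le (⟨x n, hxT n⟩ : T) le_rfl

theorem iSup_setLIntegral_Ioc_ofReal_sub_mul_eq_of_iSup_eq {ℓ r : EReal} {c : ℝ}
    (hc : ℓ < (c : EReal) ∧ (c : EReal) < r) {g : ℝ → ℝ}
    (hg : MonotoneOn g {x | ℓ < (x : EReal) ∧ (x : EReal) < r}) {L : ℝ}
    (hL : ⨆ x : {x : ℝ // ℓ < (x : EReal) ∧ (x : EReal) < r}, (g x : EReal) = L)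
    {w : ℝ → ℝ≥0∞} (hw : AEMeasurable w (volume.restrict {y | c < y ∧ (y : EReal) < r})) :
    ⨆ x : {x : ℝ // (ℓ < (x : EReal) ∧ (x : EReal) < r) ∧ c ≤ x},
        ∫⁻ y in Ioc c x, ENNReal.ofReal (g x - g y) * w y
      = ∫⁻ y in {y | c < y ∧ (y : EReal) < r}, ENNReal.ofReal (L - g y) * w y := by
  have hJ : ∀ x : ℝ, c ≤ x → (x : EReal) < r → ℓ < (x : EReal) ∧ (x : EReal) < r :=
    fun x hcx hxr => ⟨hc.1.trans_le (EReal.coe_le_coe_iff.2 hcx), hxr⟩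
  have hT : ∀ x : ℝ, (ℓ < (x : EReal) ∧ (x : EReal) < r) ∧ c ≤ x ↔ c ≤ x ∧ (x : EReal) < r :=
    fun x => ⟨fun h => ⟨h.2, h.1.2⟩, fun h => ⟨hJ x h.1 h.2, h.1⟩⟩
  have hLUB : IsLUB (g '' {x | c ≤ x ∧ (x : EReal) < r}) L := by
    refine ⟨?_, fun b hb => EReal.coe_le_coe_iff.1 (hL ▸ iSup_le fun x => ?_)⟩
    · rintro _ ⟨x, hx, rfl⟩
      exact EReal.coe_le_coe_iff.1 (hL ▸ le_iSup (fun x : {x : ℝ // ℓ < (x : EReal) ∧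
        (x : EReal) < r} => (g x : EReal)) ⟨x, hJ x hx.1 hx.2⟩)
    · have hmax : c ≤ max c x ∧ (max c x : EReal) < r :=
        ⟨le_max_left c x, max_rec' (fun z : ℝ => (z : EReal) < r) hc.2 x.2.2⟩
      exact EReal.coe_le_coe_iff.2
        ((hg x.2 (hJ _ hmax.1 hmax.2) (le_max_right c x)).trans (hb ⟨max c x, hmax, rfl⟩))
  rw [← iSup_setLIntegral_Ioc_ofReal_sub_mul_eq hc.2
    (hg.mono fun x hx => hJ x hx.1 hx.2) hLUB hw]
  exact (Equiv.subtypeEquivRight hT).iSup_congr fun _ => rfl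

theorem setLIntegral_ofReal_div_sq_mul_lt_top {K : Set ℝ} (hK : IsCompact K) {h σ : ℝ → ℝ}
    (hh : ContinuousOn h K) {f : ℝ → ℝ≥0∞}
    (hf : ∫⁻ x in K, f x / ENNReal.ofReal (σ x ^ 2) < ⊤) :
    ∫⁻ y in K, ENNReal.ofReal (h y / σ y ^ 2) * f y < ⊤ := by
  obtain ⟨C, hC⟩ := hK.exists_bound_of_continuousOn hh
  have hC_nonneg : ∀ y ∈ K, 0 ≤ C := fun y hy => (norm_nonneg _).trans (hC y hy)
  calc ∫⁻ y in K, ENNReal.ofReal (h y / σ y ^ 2) * f y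
      ≤ ∫⁻ y in K, ENNReal.ofReal C * (f y / ENNReal.ofReal (σ y ^ 2)) := by
        refine setLIntegral_mono' hK.measurableSet fun y hy => ?_
        calc ENNReal.ofReal (h y / σ y ^ 2) * f y
            ≤ ENNReal.ofReal (C * (σ y ^ 2)⁻¹) * f y := by
              rw [div_eq_mul_inv]
              gcongr
              exact (le_abs_self _).trans (hC y hy)
          _ ≤ ENNReal.ofReal C * (ENNReal.ofReal (σ y ^ 2))⁻¹ * f y := by
              rw [ENNReal.ofReal_mul (hC_nonneg y hy)]
              gcongr
              exact ENNReal.ofReal_inv_le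
          _ = ENNReal.ofReal C * (f y / ENNReal.ofReal (σ y ^ 2)) := by
              rw [div_eq_mul_inv, mul_comm (f y), mul_assoc]
    _ = ENNReal.ofReal C * ∫⁻ y in K, f y / ENNReal.ofReal (σ y ^ 2) :=
        lintegral_const_mul' _ _ ENNReal.ofReal_ne_top
    _ < ⊤ := ENNReal.mul_lt_top ENNReal.ofReal_lt_top hf

theorem exists_tail_lintegral_lt_top_iff {ℓ r : EReal} {c : ℝ}
    (hc : ℓ < (c : EReal) ∧ (c : EReal) < r) {G : ℝ → ℝ≥0∞}
    (hG : ∀ x : ℝ, ℓ < (x : EReal) → (x : EReal) < r → ∫⁻ y in Icc c x, G y < ⊤) :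
    (∃ x₀ : ℝ, (ℓ < (x₀ : EReal) ∧ (x₀ : EReal) < r) ∧
        ∫⁻ y in {y : ℝ | x₀ < y ∧ (y : EReal) < r}, G y < ⊤)
      ↔ ∫⁻ y in {y : ℝ | c < y ∧ (y : EReal) < r}, G y < ⊤ := by
  refine ⟨fun ⟨x₀, hx₀, htail⟩ => ?_, fun h => ⟨c, hc, h⟩⟩
  set x₁ := max c x₀
  have hx₁ : ℓ < (x₁ : EReal) ∧ (x₁ : EReal) < r :=
    max_rec' (fun z : ℝ => ℓ < (z : EReal) ∧ (z : EReal) < r) hc hx₀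
  have hsplit : {y : ℝ | c < y ∧ (y : EReal) < r}
      ⊆ Icc c x₁ ∪ {y : ℝ | x₀ < y ∧ (y : EReal) < r} := fun y hy => by
    rcases le_or_gt y x₁ with hyx | hxy
    · exact Or.inl ⟨hy.1.le, hyx⟩
    · exact Or.inr ⟨(le_max_right c x₀).trans_lt hxy, hy.2⟩
  calc ∫⁻ y in {y : ℝ | c < y ∧ (y : EReal) < r}, G y
      ≤ ∫⁻ y in Icc c x₁ ∪ {y : ℝ | x₀ < y ∧ (y : EReal) < r}, G y := lintegral_mono_set hsplit
    _ ≤ (∫⁻ y in Icc c x₁, G y) + ∫⁻ y in {y : ℝ | x₀ < y ∧ (y : EReal) < r}, G y :=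
        lintegral_union_le _ _ _
    _ < ⊤ := ENNReal.add_lt_top.2 ⟨hG x₁ hx₁.1 hx₁.2, htail⟩

theorem iSup_setLIntegral_Ioc_eq_two_mul {ℓ r : EReal} {c : ℝ}
    (hc : ℓ < (c : EReal) ∧ (c : EReal) < r) {ρ s σ : ℝ → ℝ} {f : ℝ → ℝ≥0∞} {sr : ℝ}
    (hρ_nonneg : ∀ y, 0 ≤ ρ y) (hρ_cont : ContinuousOn ρ {x | ℓ < (x : EReal) ∧ (x : EReal) < r})
    (hs_mono : MonotoneOn s {x | ℓ < (x : EReal) ∧ (x : EReal) < r})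
    (hsr : ⨆ x : {x : ℝ // ℓ < (x : EReal) ∧ (x : EReal) < r}, (s x : EReal) = sr)
    (hσ : Measurable σ) (hf : Measurable f) :
    ⨆ x : {x : ℝ // (ℓ < (x : EReal) ∧ (x : EReal) < r) ∧ c ≤ x},
        ∫⁻ y in Ioc c x, ENNReal.ofReal ((s x - s y) * 2 / (ρ y * σ y ^ 2)) * f y
      = 2 * ∫⁻ y in {y | c < y ∧ (y : EReal) < r},
          ENNReal.ofReal ((sr - s y) / (ρ y * σ y ^ 2)) * f y := by
  set w : ℝ → ℝ≥0∞ := fun y => ENNReal.ofReal (2 / (ρ y * σ y ^ 2)) * f y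
  have hk_nonneg : ∀ y, 0 ≤ 2 / (ρ y * σ y ^ 2) := fun y =>
    div_nonneg zero_le_two (mul_nonneg (hρ_nonneg y) (sq_nonneg _))
  have hw : AEMeasurable w (volume.restrict {y | c < y ∧ (y : EReal) < r}) := by
    have hρ_meas := (hρ_cont.mono fun y hy => ⟨hc.1.trans (EReal.coe_lt_coe_iff.2 hy.1), hy.2⟩)
      |>.aemeasurable (μ := volume)
        (measurableSet_Ioi.inter (measurableSet_lt measurable_coe_real_ereal measurable_const))
    fun_prop
  have hw_eq : ∀ t y, ENNReal.ofReal ((t - s y) * 2 / (ρ y * σ y ^ 2)) * f y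
      = ENNReal.ofReal (t - s y) * w y := fun t y => by
    rw [mul_div_assoc, ENNReal.ofReal_mul' (hk_nonneg y), mul_assoc]
  simp only [hw_eq]
  rw [iSup_setLIntegral_Ioc_ofReal_sub_mul_eq_of_iSup_eq hc hs_mono hsr hw,
    ← lintegral_const_mul' _ _ ENNReal.ofNat_ne_top]
  congr 1 with y
  rw [← hw_eq, ← ENNReal.ofReal_ofNat 2, ← mul_assoc, ← ENNReal.ofReal_mul zero_le_two,
    mul_div_left_comm, mul_div_assoc]

theorem stmt8_general (ℓ r : EReal) (μ σ : ℝ → ℝ) (f : ℝ → ℝ≥0∞) (c : ℝ)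
    (hc : ℓ < (c : EReal) ∧ (c : EReal) < r)
    (hσ : Measurable σ) (hf : Measurable f)
    (hloc : ∀ K : Set ℝ, K ⊆ {x : ℝ | ℓ < (x : EReal) ∧ (x : EReal) < r} → IsCompact K →
      IntegrableOn (fun x => 1 / (σ x)^2) K volume ∧
      IntegrableOn (fun x => μ x / (σ x)^2) K volume ∧
      (∫⁻ x in K, f x / ENNReal.ofReal ((σ x)^2) ∂volume) < ⊤)
    (ρ s : ℝ → ℝ) (sr : ℝ) (vXf : ℝ → ℝ≥0∞) (vXr : ℝ≥0∞)
    (hρ : ∀ y : ℝ, ρ y = Real.exp (-∫ u in c..y, 2 * μ u / (σ u)^2))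
    (hs : ∀ x : ℝ, s x = ∫ y in c..x, ρ y)
    -- `s(r) < ∞`: the left limit of `s` at `r`, i.e. the supremum of `s` over `J`,
    -- is the (finite) real number `sr`.
    (hsr : (⨆ x : {x : ℝ // ℓ < (x : EReal) ∧ (x : EReal) < r}, ((s (x : ℝ) : ℝ) : EReal))
      = (sr : EReal))
    (hvXf : ∀ x : ℝ, vXf x
      = ∫⁻ y in Set.Ioc c x, ENNReal.ofReal ((s x - s y) * 2 / (ρ y * (σ y)^2)) * f y)
    (hvXr : vXr = ⨆ x : {x : ℝ // (ℓ < (x : EReal) ∧ (x : EReal) < r) ∧ c ≤ x}, vXf (x : ℝ)) :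
    (vXr < ⊤ ↔ ∃ x₀ : ℝ, (ℓ < (x₀ : EReal) ∧ (x₀ : EReal) < r) ∧
        (∫⁻ y in {y : ℝ | x₀ < y ∧ (y : EReal) < r},
          ENNReal.ofReal ((sr - s y) / (ρ y * (σ y)^2)) * f y ∂volume) < ⊤)
    ∧ ((∃ x₀ : ℝ, (ℓ < (x₀ : EReal) ∧ (x₀ : EReal) < r) ∧
        (∫⁻ y in {y : ℝ | x₀ < y ∧ (y : EReal) < r},
          ENNReal.ofReal ((sr - s y) / (ρ y * (σ y)^2)) * f y ∂volume) < ⊤) → vXr < ⊤)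
    ∧ (¬ (∃ x₀ : ℝ, (ℓ < (x₀ : EReal) ∧ (x₀ : EReal) < r) ∧
        (∫⁻ y in {y : ℝ | x₀ < y ∧ (y : EReal) < r},
          ENNReal.ofReal ((sr - s y) / (ρ y * (σ y)^2)) * f y ∂volume) < ⊤) → vXr = ⊤) := by
  set J : Set ℝ := {x : ℝ | ℓ < (x : EReal) ∧ (x : EReal) < r}
  have hJ : IsOpen J := isOpen_Ioo.preimage continuous_coe_real_ereal
  have hJc : J.OrdConnected := ordConnected_Ioo.preimage_mono EReal.coe_strictMono.monotone
  have hρ_pos : ∀ y, 0 < ρ y := fun y => hρ y ▸ Real.exp_pos _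
  have hρ_cont : ContinuousOn ρ J := by
    rw [show ρ = _ from funext hρ]
    refine (continuousOn_primitive_of_intervalIntegrable hJ hc fun a ha b hb => ?_).neg.rexp
    simpa only [mul_div_assoc] using IntegrableOn.intervalIntegrable
      ((hloc _ (hJc.uIcc_subset ha hb) isCompact_uIcc).2.1.const_mul 2)
  have hρ_int : ∀ a ∈ J, ∀ b ∈ J, IntervalIntegrable ρ volume a b := fun a ha b hb =>
    (hρ_cont.mono (hJc.uIcc_subset ha hb)).intervalIntegrable
  have hs_mono : MonotoneOn s J :=
    funext hs ▸ monotoneOn_primitive_of_nonneg hc hρ_int fun y => (hρ_pos y).le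
  have hs_cont : ContinuousOn s J :=
    funext hs ▸ continuousOn_primitive_of_intervalIntegrable hJ hc hρ_int
  set G : ℝ → ℝ≥0∞ := fun y => ENNReal.ofReal ((sr - s y) / (ρ y * σ y ^ 2)) * f y
  have hG_loc : ∀ x : ℝ, ℓ < (x : EReal) → (x : EReal) < r → ∫⁻ y in Icc c x, G y < ⊤ := by
    intro x hx₁ hx₂
    have hK : Icc c x ⊆ J := Icc_subset_uIcc.trans (hJc.uIcc_subset hc ⟨hx₁, hx₂⟩)
    have hh : ContinuousOn (fun y => (sr - s y) / ρ y) (Icc c x) :=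
      ((continuousOn_const.sub hs_cont).div hρ_cont fun y _ => (hρ_pos y).ne').mono hK
    simpa only [G, ← div_div] using
      setLIntegral_ofReal_div_sq_mul_lt_top isCompact_Icc hh (hloc _ hK isCompact_Icc).2.2
  have hvXr_lt_top : vXr < ⊤ ↔ ∫⁻ y in {y : ℝ | c < y ∧ (y : EReal) < r}, G y < ⊤ := by
    simp only [hvXr, hvXf]
    rw [iSup_setLIntegral_Ioc_eq_two_mul hc (fun y => (hρ_pos y).le) hρ_cont hs_mono hsr hσ hf]
    simp [G, lt_top_iff_ne_top, ENNReal.mul_eq_top]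
  have key := hvXr_lt_top.trans (exists_tail_lintegral_lt_top_iff hc hG_loc).symm
  exact ⟨key, key.2, fun h => not_lt_top_iff.1 fun hlt => h (key.1 hlt)⟩

/-- With `f = b² : J → (0, ∞]` and `s(r) < ∞` (the supremum of the scale function
equals the real number `sr`), finiteness of `v_X(r)` (the monotone limit of
`v_X x = ∫_c^x (s x - s y)·2 f(y)/(s'(y)σ²(y)) dy`, realized as a supremum in `[0,∞]`)
is equivalent to local integrability of `(s(r) - s)·f/(s'σ²)` at `r⁻`.  In particular, if
`(s(r) - s)f/(s'σ²) ∈ L¹_loc(r⁻)` then `v_X(r) < ∞`, and if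
`(s(r) - s)f/(s'σ²) ∉ L¹_loc(r⁻)` then `v_X(r) = ∞`. -/
theorem stmt8 (ℓ r : EReal) (hlr : ℓ < r) (μ σ : ℝ → ℝ) (f : ℝ → ℝ≥0∞) (c : ℝ)
    (hc : ℓ < (c : EReal) ∧ (c : EReal) < r)
    (hμ : Measurable μ) (hσ : Measurable σ) (hf : Measurable f)
    (hσne : ∀ x : ℝ, ℓ < (x : EReal) → (x : EReal) < r → σ x ≠ 0)
    (hfpos : ∀ x : ℝ, ℓ < (x : EReal) → (x : EReal) < r → 0 < f x)
    (hloc : ∀ K : Set ℝ, K ⊆ {x : ℝ | ℓ < (x : EReal) ∧ (x : EReal) < r} → IsCompact K →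
      IntegrableOn (fun x => 1 / (σ x)^2) K volume ∧
      IntegrableOn (fun x => μ x / (σ x)^2) K volume ∧
      (∫⁻ x in K, f x / ENNReal.ofReal ((σ x)^2) ∂volume) < ⊤)
    (ρ s : ℝ → ℝ) (sr : ℝ) (vXf : ℝ → ℝ≥0∞) (vXr : ℝ≥0∞)
    (hρ : ∀ y : ℝ, ρ y = Real.exp (-∫ u in c..y, 2 * μ u / (σ u)^2))
    (hs : ∀ x : ℝ, s x = ∫ y in c..x, ρ y)
    -- `s(r) < ∞`: the left limit of `s` at `r`, i.e. the supremum of `s` over `J`,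
    -- is the (finite) real number `sr`.
    (hsr : (⨆ x : {x : ℝ // ℓ < (x : EReal) ∧ (x : EReal) < r}, ((s (x : ℝ) : ℝ) : EReal))
      = (sr : EReal))
    (hvXf : ∀ x : ℝ, vXf x
      = ∫⁻ y in Set.Ioc c x, ENNReal.ofReal ((s x - s y) * 2 / (ρ y * (σ y)^2)) * f y)
    (hvXr : vXr = ⨆ x : {x : ℝ // (ℓ < (x : EReal) ∧ (x : EReal) < r) ∧ c ≤ x}, vXf (x : ℝ)) :
    (vXr < ⊤ ↔ ∃ x₀ : ℝ, (ℓ < (x₀ : EReal) ∧ (x₀ : EReal) < r) ∧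
        (∫⁻ y in {y : ℝ | x₀ < y ∧ (y : EReal) < r},
          ENNReal.ofReal ((sr - s y) / (ρ y * (σ y)^2)) * f y ∂volume) < ⊤)
    ∧ ((∃ x₀ : ℝ, (ℓ < (x₀ : EReal) ∧ (x₀ : EReal) < r) ∧
        (∫⁻ y in {y : ℝ | x₀ < y ∧ (y : EReal) < r},
          ENNReal.ofReal ((sr - s y) / (ρ y * (σ y)^2)) * f y ∂volume) < ⊤) → vXr < ⊤)
    ∧ (¬ (∃ x₀ : ℝ, (ℓ < (x₀ : EReal) ∧ (x₀ : EReal) < r) ∧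
        (∫⁻ y in {y : ℝ | x₀ < y ∧ (y : EReal) < r},
          ENNReal.ofReal ((sr - s y) / (ρ y * (σ y)^2)) * f y ∂volume) < ⊤) → vXr = ⊤) :=
  stmt8_general ℓ r μ σ f c hc hσ hf hloc ρ s sr vXf vXr hρ hs hsr hvXf hvXr
end
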